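/- Let $V$ be a vertex algebra and $f_z : V \otimes V \to V((z))$ linear. The deformed product $a\,{}_z^t\, b := a\,{}_z\, b + t\, f_z(a,b)$ satisfies associativity modulo $t^2$ — i.e. for all $a,b,c$ there exists $l$ with $(z+w)^l\,(a\,{}_z^t\, b)\,{}_w^t\, c = (z+w)^l\, a\,{}_{z+w}^t\,(b\,{}_w^t\, c) \pmod{t^2}$ — if and only if $V$ satisfies associativity and for all $a,b,c \in V$ there exists $n \in \mathbb{N}$ such that $(w+z)^n\big[f_w(a\,{}_z\, b, c) + f_z(a,b)\,{}_w\, c\big] = (w+z)^n\big[a\,{}_{z+w}\, f_w(b,c) + f_{z+w}(a, b\,{}_w\, c)\big]$. -/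

import Mathlib

/- Coefficient-wise formalization of vertex algebras:
a series `w ∈ V((z))` is encoded by its coefficient function `ℤ → V`
(the value at `n` being the coefficient of `z^n`), and a field/product
`a ⊗ b ↦ a_z b ∈ V((z))` by a map `V → V → ℤ → V`. -/

namespace VertexCohomology

open scoped BigOperators

section Defs

variable (𝕜 : Type*) [Field 𝕜] [CharZero 𝕜]
variable {V W M : Type*} [AddCommGroup V] [Module 𝕜 V] [AddCommGroup M] [Module 𝕜 M]

/-- Coefficient of `z^n` in `e^{z d} w(z)`, where `w` is a series with coefficients `w n`. -/
noncomputable def ezd (d : M →ₗ[𝕜] M) (w : ℤ → M) : ℤ → M :=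
  fun n => ∑ᶠ k : ℕ, ((k.factorial : 𝕜)⁻¹) • (d ^ k) (w (n - (k : ℤ)))

/-- Coefficient of `z^n` in `w(-z)`. -/
def negz (w : ℤ → M) : ℤ → M := fun n => ((n.negOnePow : ℤ)) • w n

/-- Coefficient of `z^n` in `(d/dz) w(z)`. -/
def derivz (w : ℤ → M) : ℤ → M := fun n => (n + 1) • w (n + 1)

/-- The constant series with value `a`. -/
def unitSeries (a : M) : ℤ → M := fun n => if n = 0 then a else 0

/-- Coefficient of `z^m w^n` in `(z+w)^l · F(z,w)`, where `F m n` is the coefficient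
of `z^m w^n` of a formal series in two variables. -/
def mulZW (l : ℕ) (F : ℤ → ℤ → M) : ℤ → ℤ → M :=
  fun m n => ∑ k ∈ Finset.range (l + 1), (l.choose k : ℤ) • F (m - ((l - k : ℕ) : ℤ)) (n - (k : ℤ))

/-- Coefficient of `x^m y^n` in `(x-y)^l · F(x,y)`. -/
def mulZmW (l : ℕ) (F : ℤ → ℤ → M) : ℤ → ℤ → M :=
  fun m n => ∑ k ∈ Finset.range (l + 1),
    ((-1 : ℤ) ^ k * (l.choose k : ℤ)) • F (m - ((l - k : ℕ) : ℤ)) (n - (k : ℤ))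

/-- Coefficient of `z^m w^n` in `F(a, ·)_{z+w}` applied to the series `u` in the
variable `w`; here `(z+w)^j` is expanded in nonnegative powers of `w`:
`(z+w)^j = ∑_{i ≥ 0} C(j,i) z^{j-i} w^i`. -/
noncomputable def shiftComp (F : V → W → ℤ → M) (a : V) (u : ℤ → W) : ℤ → ℤ → M :=
  fun m n => ∑ᶠ i : ℕ, (Ring.choose (m + (i : ℤ)) i) • F a (u (n - (i : ℤ))) (m + (i : ℤ))

/-- The axioms of a vertex algebra, stated coefficient-wise:
`Y a b n` is the coefficient of `z^n` in `a_z b`. -/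
structure IsVertexAlg (Y : V → V → ℤ → V) (one : V) (D : V →ₗ[𝕜] V) : Prop where
  linear_left : ∀ (b : V) (n : ℤ), IsLinearMap 𝕜 (fun a => Y a b n)
  linear_right : ∀ (a : V) (n : ℤ), IsLinearMap 𝕜 (fun b => Y a b n)
  trunc : ∀ a b, ∃ N : ℤ, ∀ n < N, Y a b n = 0
  unit_left : ∀ a, Y one a = unitSeries a
  unit_right : ∀ a, Y a one = ezd 𝕜 D (unitSeries a)
  transl : ∀ a b, Y (D a) b = derivz (Y a b)
  derivation : ∀ a b n, D (Y a b n) = Y (D a) b n + Y a (D b) n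
  comm : ∀ a b, Y a b = ezd 𝕜 D (negz (Y b a))
  assoc : ∀ a b c, ∃ l : ℕ,
    mulZW l (fun m n => Y (Y a b m) c n) = mulZW l (shiftComp Y a (Y b c))

/-- The axioms of a module over a vertex algebra, stated coefficient-wise. -/
structure IsVModule (Y : V → V → ℤ → V) (one : V) (D : V →ₗ[𝕜] V)
    (YM : V → M → ℤ → M) (d : M →ₗ[𝕜] M) : Prop where
  linear_left : ∀ (u : M) (n : ℤ), IsLinearMap 𝕜 (fun a => YM a u n)
  linear_right : ∀ (a : V) (n : ℤ), IsLinearMap 𝕜 (fun u => YM a u n)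
  trunc : ∀ a u, ∃ N : ℤ, ∀ n < N, YM a u n = 0
  unit : ∀ u, YM one u = unitSeries u
  transl : ∀ a u, YM (D a) u = derivz (YM a u)
  derivation : ∀ a u n, d (YM a u n) = YM (D a) u n + YM a (d u) n
  assoc : ∀ a b u, ∃ l : ℕ,
    mulZW l (fun m n => YM (Y a b m) u n) = mulZW l (shiftComp YM a (YM b u))

/-- The right action `u_z a := e^{z d}(a_{-z} u)` of `V` on `M`. -/
noncomputable def rAct (YM : V → M → ℤ → M) (d : M →ₗ[𝕜] M) (u : M) (a : V) : ℤ → M :=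
  ezd 𝕜 d (negz (YM a u))

/-- `(δ₁ g)_z (a,b) = a_z g(b) - g(a_z b) + g(a)_z b`. -/
noncomputable def delta1 (Y : V → V → ℤ → V) (YM : V → M → ℤ → M) (d : M →ₗ[𝕜] M)
    (g : V → M) (a b : V) : ℤ → M :=
  fun n => YM a (g b) n - g (Y a b n) + rAct 𝕜 YM d (g a) b n

/-- Membership in `C²(V,M)`. -/
structure IsC2 (one : V) (D : V →ₗ[𝕜] V) (d : M →ₗ[𝕜] M) (f : V → V → ℤ → M) : Prop where
  linear_left : ∀ (b : V) (n : ℤ), IsLinearMap 𝕜 (fun a => f a b n)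
  linear_right : ∀ (a : V) (n : ℤ), IsLinearMap 𝕜 (fun b => f a b n)
  trunc : ∀ a b, ∃ N : ℤ, ∀ n < N, f a b n = 0
  unit_right : ∀ a, f a one = 0
  unit_left : ∀ b, f one b = 0
  transl : ∀ a b, derivz (f a b) = f (D a) b
  derivation : ∀ a b n, d (f a b n) = f (D a) b n + f a (D b) n
  symm : ∀ a b, f a b = ezd 𝕜 d (negz (f b a))

/-- The 2-cocycle condition: for all `a,b,c` there is `N` with
`(x+z)^N [f_z(a_x b, c) + f_x(a,b)_z c] = (x+z)^N [a_{x+z} f_z(b,c) + f_{x+z}(a, b_z c)]`,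
coefficients taken at `x^m z^n`, `(x+z)^j` expanded in nonnegative powers of `z`. -/
def Cocycle (Y : V → V → ℤ → V) (YM : V → M → ℤ → M) (d : M →ₗ[𝕜] M)
    (f : V → V → ℤ → M) : Prop :=
  ∀ a b c : V, ∃ N : ℕ,
    mulZW N (fun m n => f (Y a b m) c n + rAct 𝕜 YM d (f a b m) c n)
      = mulZW N (fun m n => shiftComp YM a (f b c) m n + shiftComp f a (Y b c) m n)

/-- The square-zero extension product on `V ⊕ M`:
`(a,u)_z (b,v) = (a_z b, a_z v + u_z b + ψ_z(a,b))`. -/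
noncomputable def extY (Y : V → V → ℤ → V) (YM : V → M → ℤ → M) (d : M →ₗ[𝕜] M)
    (ψ : V → V → ℤ → M) : V × M → V × M → ℤ → V × M :=
  fun p q n => (Y p.1 q.1 n, YM p.1 q.2 n + rAct 𝕜 YM d p.2 q.1 n + ψ p.1 q.1 n)

/-- The first-order deformed product on `V[t]/(t²) ≃ V × V` (first component the
constant term, second the coefficient of `t`): `a_z^t b = a_z b + t f_z(a,b)`. -/
def defY (Y : V → V → ℤ → V) (f : V → V → ℤ → V) : V × V → V × V → ℤ → V × V :=
  fun p q n => (Y p.1 q.1 n, Y p.1 q.2 n + Y p.2 q.1 n + f p.1 q.1 n)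

end Defs

/-! Write `p = (a, a')` for `a + t a'`. Modulo `t²`, deformed associativity at `p, q, r` has
constant term the associativity of `V` at `a, b, c`, and `t`-coefficient the sum of the
associativity identities at `(a, b, c')`, `(a, b', c)`, `(a', b, c)` and the cocycle identity at
`(a, b, c)`. Taking `a' = b' = c' = 0` isolates the cocycle identity. Conversely, an identity that
holds after multiplying by `(z+w)^l` still holds for every larger exponent, so the five identities
can be given a common exponent and added. -/

section MulZW

variable {V W : Type*} [AddCommGroup V] [AddCommGroup W]

open Finset in
theorem mulZW_succ (l : ℕ) (F : ℤ → ℤ → V) (m n : ℤ) :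
    mulZW (l + 1) F m n = mulZW l F (m - 1) n + mulZW l F m (n - 1) := by
  simp only [mulZW, natCast_zsmul]
  rw [sum_choose_succ_nsmul (fun i j => F (m - j) (n - i)) l]
  congr 1 <;> refine sum_congr rfl fun k hk => ?_
  · have hk : k ≤ l := Nat.lt_succ_iff.mp (mem_range.mp hk)
    congr 2
    omega
  · congr 2; omega

theorem mulZW_eq_of_le {F G : ℤ → ℤ → V} {l L : ℕ} (hl : l ≤ L)
    (h : mulZW l F = mulZW l G) : mulZW L F = mulZW L G := by
  induction L, hl using Nat.le_induction with
  | base => exact h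
  | succ L _ ih => funext m n; rw [mulZW_succ, mulZW_succ, ih]

theorem eventually_mulZW_eq_iff {F G : ℤ → ℤ → V} :
    (∀ᶠ l in Filter.atTop, mulZW l F = mulZW l G) ↔ ∃ l, mulZW l F = mulZW l G :=
  ⟨Filter.Eventually.exists, fun ⟨l, h⟩ =>
    Filter.eventually_atTop.mpr ⟨l, fun _ hL => mulZW_eq_of_le hL h⟩⟩

theorem mulZW_add (l : ℕ) (F G : ℤ → ℤ → V) : mulZW l (F + G) = mulZW l F + mulZW l G := by
  funext m n
  simp [mulZW, Finset.sum_add_distrib]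

theorem mulZW_map (φ : V →+ W) (l : ℕ) (F : ℤ → ℤ → V) :
    mulZW l (fun m n => φ (F m n)) = fun m n => φ (mulZW l F m n) := by
  funext m n
  simp [mulZW, map_sum]

theorem mulZW_prod_eq_iff {l : ℕ} {F G : ℤ → ℤ → V × W} :
    mulZW l F = mulZW l G ↔
      mulZW l (fun m n => (F m n).1) = mulZW l (fun m n => (G m n).1) ∧
        mulZW l (fun m n => (F m n).2) = mulZW l (fun m n => (G m n).2) := by
  have fst_eq := mulZW_map (AddMonoidHom.fst V W) l
  have snd_eq := mulZW_map (AddMonoidHom.snd V W) l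
  simp only [AddMonoidHom.coe_fst, AddMonoidHom.coe_snd] at fst_eq snd_eq
  rw [fst_eq, fst_eq, snd_eq, snd_eq]
  refine ⟨fun h => ⟨by rw [h], by rw [h]⟩, fun ⟨h₁, h₂⟩ => ?_⟩
  funext m n
  exact Prod.ext (congrFun₂ h₁ m n) (congrFun₂ h₂ m n)

end MulZW

section ShiftComp

variable {A V W : Type*} [AddCommGroup W]

theorem shiftComp_eq_sum [Zero V] {F : A → V → ℤ → W} {a : A} {u : ℤ → V} {N : ℤ}
    (hF : ∀ k, F a 0 k = 0) (hu : ∀ k < N, u k = 0) (m n : ℤ) :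
    shiftComp F a u m n = ∑ i ∈ Finset.range (n - N + 1).toNat,
      Ring.choose (m + (i : ℤ)) i • F a (u (n - (i : ℤ))) (m + (i : ℤ)) := by
  refine finsum_eq_sum_of_support_subset _ fun i hi => ?_
  by_contra hiN
  simp only [Finset.coe_range, Set.mem_Iio, not_lt] at hiN
  exact hi (by dsimp only; rw [hu _ (by omega), hF, smul_zero])

theorem shiftComp_zero_left [Zero A] {F : A → V → ℤ → W} (hF : ∀ v k, F 0 v k = 0)
    (u : ℤ → V) (m n : ℤ) : shiftComp F 0 u m n = 0 := by
  simp [shiftComp, hF]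

theorem shiftComp_of_forall_eq_zero [Zero V] {F : A → V → ℤ → W} {a : A} {u : ℤ → V}
    (hF : ∀ k, F a 0 k = 0) (hu : ∀ k, u k = 0) (m n : ℤ) : shiftComp F a u m n = 0 := by
  simp [shiftComp, hF, hu]

end ShiftComp

section Deformation

variable {V : Type*} [AddCommGroup V] {Y f : V → V → ℤ → V}

theorem defY_defY (hYl : ∀ a₁ a₂ b n, Y (a₁ + a₂) b n = Y a₁ b n + Y a₂ b n)
    (a a' b b' c c' : V) (m n : ℤ) :
    defY Y f (defY Y f (a, a') (b, b') m) (c, c') n =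
      (Y (Y a b m) c n, Y (Y a b m) c' n + Y (Y a b' m) c n + Y (Y a' b m) c n
        + (f (Y a b m) c n + Y (f a b m) c n)) := by
  simp only [defY, hYl, Prod.mk.injEq, true_and]
  abel

theorem shiftComp_defY_defY (hYr : ∀ a b₁ b₂ n, Y a (b₁ + b₂) n = Y a b₁ n + Y a b₂ n)
    (hf0 : ∀ a n, f a 0 n = 0) (hYt : ∀ a b, ∃ N : ℤ, ∀ n < N, Y a b n = 0)
    (hft : ∀ a b, ∃ N : ℤ, ∀ n < N, f a b n = 0) (a a' b b' c c' : V) (m n : ℤ) :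
    shiftComp (defY Y f) (a, a') (defY Y f (b, b') (c, c')) m n =
      (shiftComp Y a (Y b c) m n, shiftComp Y a (Y b c') m n + shiftComp Y a (Y b' c) m n
        + shiftComp Y a' (Y b c) m n + (shiftComp Y a (f b c) m n + shiftComp f a (Y b c) m n)) := by
  have hY0 : ∀ a n, Y a 0 n = 0 := fun a n => by simpa using hYr a 0 0 n
  obtain ⟨N₁, h₁⟩ := hYt b c
  obtain ⟨N₂, h₂⟩ := hYt b c'
  obtain ⟨N₃, h₃⟩ := hYt b' c
  obtain ⟨N₄, h₄⟩ := hft b c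
  set N := min (min N₁ N₂) (min N₃ N₄)
  have hbc : ∀ k < N, Y b c k = 0 := fun k hk => h₁ k (by omega)
  have hbc' : ∀ k < N, Y b c' k = 0 := fun k hk => h₂ k (by omega)
  have hb'c : ∀ k < N, Y b' c k = 0 := fun k hk => h₃ k (by omega)
  have hfbc : ∀ k < N, f b c k = 0 := fun k hk => h₄ k (by omega)
  have hdefY : ∀ k < N, defY Y f (b, b') (c, c') k = 0 := fun k hk => by
    simp [defY, hbc k hk, hbc' k hk, hb'c k hk, hfbc k hk]
  rw [shiftComp_eq_sum (fun k => by simp [defY, hY0, hf0]) hdefY, shiftComp_eq_sum (hY0 a) hbc,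
    shiftComp_eq_sum (hY0 a) hbc', shiftComp_eq_sum (hY0 a) hb'c, shiftComp_eq_sum (hY0 a') hbc,
    shiftComp_eq_sum (hY0 a) hfbc, shiftComp_eq_sum (hf0 a) hbc]
  simp only [defY, hYr, smul_add, Prod.smul_mk]
  refine Prod.ext ?_ ?_
  · simp only [Prod.fst_sum]
  · simp only [Prod.snd_sum, Finset.sum_add_distrib]
    abel

theorem defY_assoc_iff (hYl : ∀ a₁ a₂ b n, Y (a₁ + a₂) b n = Y a₁ b n + Y a₂ b n)
    (hYr : ∀ a b₁ b₂ n, Y a (b₁ + b₂) n = Y a b₁ n + Y a b₂ n)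
    (hf0 : ∀ a n, f a 0 n = 0) (hYt : ∀ a b, ∃ N : ℤ, ∀ n < N, Y a b n = 0)
    (hft : ∀ a b, ∃ N : ℤ, ∀ n < N, f a b n = 0) (a a' b b' c c' : V) (l : ℕ) :
    mulZW l (fun m n => defY Y f (defY Y f (a, a') (b, b') m) (c, c') n)
        = mulZW l (shiftComp (defY Y f) (a, a') (defY Y f (b, b') (c, c'))) ↔
      mulZW l (fun m n => Y (Y a b m) c n) = mulZW l (shiftComp Y a (Y b c)) ∧
        mulZW l ((fun m n => Y (Y a b m) c' n) + (fun m n => Y (Y a b' m) c n)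
            + (fun m n => Y (Y a' b m) c n) + (fun m n => f (Y a b m) c n + Y (f a b m) c n))
          = mulZW l (shiftComp Y a (Y b c') + shiftComp Y a (Y b' c) + shiftComp Y a' (Y b c)
            + (fun m n => shiftComp Y a (f b c) m n + shiftComp f a (Y b c) m n)) := by
  simp only [mulZW_prod_eq_iff, defY_defY hYl, shiftComp_defY_defY hYr hf0 hYt hft]
  rfl

theorem defY_assoc_const_iff (hYl : ∀ a₁ a₂ b n, Y (a₁ + a₂) b n = Y a₁ b n + Y a₂ b n)
    (hYr : ∀ a b₁ b₂ n, Y a (b₁ + b₂) n = Y a b₁ n + Y a b₂ n)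
    (hf0 : ∀ a n, f a 0 n = 0) (hYt : ∀ a b, ∃ N : ℤ, ∀ n < N, Y a b n = 0)
    (hft : ∀ a b, ∃ N : ℤ, ∀ n < N, f a b n = 0) (a b c : V) (l : ℕ) :
    mulZW l (fun m n => defY Y f (defY Y f (a, 0) (b, 0) m) (c, 0) n)
        = mulZW l (shiftComp (defY Y f) (a, 0) (defY Y f (b, 0) (c, 0))) ↔
      mulZW l (fun m n => Y (Y a b m) c n) = mulZW l (shiftComp Y a (Y b c)) ∧
        mulZW l (fun m n => f (Y a b m) c n + Y (f a b m) c n)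
          = mulZW l (fun m n => shiftComp Y a (f b c) m n + shiftComp f a (Y b c) m n) := by
  have hY0l : ∀ b n, Y 0 b n = 0 := fun b n => by simpa using hYl 0 0 b n
  have hY0r : ∀ a n, Y a 0 n = 0 := fun a n => by simpa using hYr a 0 0 n
  rw [defY_assoc_iff hYl hYr hf0 hYt hft]
  simp only [Pi.add_def, hY0l, hY0r, shiftComp_zero_left hY0l,
    shiftComp_of_forall_eq_zero (hY0r a) (hY0r b), shiftComp_of_forall_eq_zero (hY0r a) (hY0l c),
    zero_add]

end Deformation

variable (𝕜 : Type*) [Field 𝕜] [CharZero 𝕜]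
  {V : Type*} [AddCommGroup V] [Module 𝕜 V]
  (Y : V → V → ℤ → V) (one : V) (D : V →ₗ[𝕜] V)

theorem deformation_associativity_iff
    (hV : IsVertexAlg 𝕜 Y one D) (f : V → V → ℤ → V)
    (hfr : ∀ (a : V) (n : ℤ), IsLinearMap 𝕜 (fun b => f a b n))
    (hft : ∀ a b, ∃ N : ℤ, ∀ n < N, f a b n = 0) :
    (∀ p q r : V × V, ∃ l : ℕ,
        mulZW l (fun m n => defY Y f (defY Y f p q m) r n)
          = mulZW l (shiftComp (defY Y f) p (defY Y f q r)))
      ↔ ((∀ a b c : V, ∃ l : ℕ,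
            mulZW l (fun m n => Y (Y a b m) c n) = mulZW l (shiftComp Y a (Y b c))) ∧
          (∀ a b c : V, ∃ N : ℕ,
            mulZW N (fun m n => f (Y a b m) c n + Y (f a b m) c n)
              = mulZW N (fun m n => shiftComp Y a (f b c) m n + shiftComp f a (Y b c) m n))) := by
  have hYl : ∀ a₁ a₂ b n, Y (a₁ + a₂) b n = Y a₁ b n + Y a₂ b n :=
    fun a₁ a₂ b n => (hV.linear_left b n).map_add a₁ a₂
  have hYr : ∀ a b₁ b₂ n, Y a (b₁ + b₂) n = Y a b₁ n + Y a b₂ n :=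
    fun a b₁ b₂ n => (hV.linear_right a n).map_add b₁ b₂
  have hf0 : ∀ a n, f a 0 n = 0 := fun a n => (hfr a n).map_zero
  constructor
  · intro h
    have hconst := fun a b c => (h (a, 0) (b, 0) (c, 0)).imp fun l =>
      (defY_assoc_const_iff hYl hYr hf0 hV.trunc hft a b c l).mp
    exact ⟨fun a b c => (hconst a b c).imp fun _ => And.left,
      fun a b c => (hconst a b c).imp fun _ => And.right⟩
  · rintro ⟨hassoc, hcocycle⟩ ⟨a, a'⟩ ⟨b, b'⟩ ⟨c, c'⟩
    simp only [← eventually_mulZW_eq_iff] at hassoc hcocycle ⊢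
    filter_upwards [hassoc a b c, hassoc a b c', hassoc a b' c, hassoc a' b c, hcocycle a b c]
      with l h₀ h₁ h₂ h₃ h₄
    rw [defY_assoc_iff hYl hYr hf0 hV.trunc hft]
    simp only [mulZW_add, h₀, h₁, h₂, h₃, h₄, and_self]

end VertexCohomology
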